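/- arXiv:2006.16359 — 8 statements merged into one kernel-verified Lean document; each statement's English description precedes it below -/
import Mathlib

section
/- For any subset J of the simple transpositions of S_n, the maximal-length element w_0^J of the parabolic quotient S_n^J = {σ ∈ S_n : s_i ∈ J implies σ(i) < σ(i+1)} avoids the pattern 132. -/
open Equiv

/-- The adjacent transposition `s i`, swapping positions `i` and `i+1` (0-indexed). -/
def simpleT {n : ℕ} (i : Fin n) : Equiv.Perm (Fin (n+1)) := Equiv.swap i.castSucc i.succ

/-- Coxeter length: minimal length of a word in adjacent transpositions. -/
noncomputable def len {n : ℕ} (σ : Equiv.Perm (Fin (n+1))) : ℕ :=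
  sInf {k | ∃ l : List (Fin n), l.length = k ∧ (l.map simpleT).prod = σ}

/-- `σ` contains the pattern 132. -/
def contains132 {m : ℕ} (σ : Equiv.Perm (Fin m)) : Prop :=
  ∃ i₁ i₂ i₃ : Fin m, i₁ < i₂ ∧ i₂ < i₃ ∧ σ i₁ < σ i₃ ∧ σ i₃ < σ i₂

/-- The parabolic quotient `SₙᴶJ`: permutations ascending at all positions indexed by `J`. -/
def parabolicQuotient {n : ℕ} (J : Set (Fin n)) : Set (Equiv.Perm (Fin (n+1))) :=
  {σ | ∀ i ∈ J, σ i.castSucc < σ i.succ}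

/-! The Coxeter length of a permutation is its number of inversions. A 132 occurrence can be
chosen with consecutive outer values `a`, `a + 1`; these sit at non-adjacent positions, so swapping
them (left multiplication by `s_a`) keeps every ascent at a position of `J`, while it adds exactly
one inversion. Hence `s_a w` would be a longer element of the same parabolic quotient. -/

namespace Equiv.Perm

variable {α : Type*} [LinearOrder α]

def inversions [Fintype α] (σ : Perm α) : Finset (α × α) :=
  {p | p.1 < p.2 ∧ σ p.2 < σ p.1}

def invCount [Fintype α] (σ : Perm α) : ℕ := (inversions σ).card

lemma mem_inversions [Fintype α] {σ : Perm α} {p : α × α} :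
    p ∈ inversions σ ↔ p.1 < p.2 ∧ σ p.2 < σ p.1 := by
  simp [inversions]

lemma invCount_one [Fintype α] : invCount (1 : Perm α) = 0 :=
  Finset.card_eq_zero.2 <| Finset.eq_empty_of_forall_notMem fun _ hp =>
    lt_asymm (mem_inversions.1 hp).1 (mem_inversions.1 hp).2

lemma eq_one_of_strictMono [WellFoundedLT α] {σ : Perm α} (h : StrictMono σ) : σ = 1 := by
  ext x
  exact congr($(Subsingleton.elim (h.orderIsoOfSurjective σ σ.surjective) (OrderIso.refl α)) x)

lemma exists_succ_lt_castSucc {n : ℕ} {σ : Perm (Fin (n+1))} (h : σ ≠ 1) :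
    ∃ i : Fin n, σ i.succ < σ i.castSucc := by
  by_contra! hmono
  refine h (eq_one_of_strictMono (Fin.strictMono_iff_lt_succ.2 fun i => ?_))
  exact (hmono i).lt_of_ne (σ.injective.ne Fin.castSucc_lt_succ.ne)

end Equiv.Perm

open Perm

section SimpleTransposition

variable {n : ℕ}

lemma simpleT_mul_self (a : Fin n) : simpleT a * simpleT a = 1 := swap_mul_self _ _

lemma simpleT_lt_simpleT_iff (a : Fin n) {u v : Fin (n+1)} (huv : u < v) :
    simpleT a u < simpleT a v ↔ ¬(u = a.castSucc ∧ v = a.succ) := by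
  rw [Fin.lt_def] at huv ⊢
  simp only [simpleT, swap_apply_def, Fin.ext_iff, apply_ite Fin.val, Fin.val_castSucc,
    Fin.val_succ]
  split_ifs <;> omega

lemma simpleT_mul_mem_parabolicQuotient {J : Set (Fin n)} {w : Perm (Fin (n+1))}
    (hw : w ∈ parabolicQuotient J) {a : Fin n}
    (ha : ∀ i : Fin n, w i.castSucc = a.castSucc → w i.succ ≠ a.succ) :
    simpleT a * w ∈ parabolicQuotient J :=
  fun i hi => (simpleT_lt_simpleT_iff a (hw i hi)).2 fun ⟨h₁, h₂⟩ => ha i h₁ h₂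

lemma inversions_simpleT_mul {ρ : Perm (Fin (n+1))} {a : Fin n} {p q : Fin (n+1)} (hpq : p < q)
    (hp : ρ p = a.castSucc) (hq : ρ q = a.succ) :
    inversions (simpleT a * ρ) = insert (p, q) (inversions ρ) := by
  ext ⟨x, y⟩
  simp only [Finset.mem_insert, mem_inversions, Perm.mul_apply, Prod.mk.injEq]
  constructor
  · rintro ⟨hxy, hinv⟩
    rcases lt_or_gt_of_ne (ρ.injective.ne hxy.ne) with hlt | hgt
    · obtain ⟨hx, hy⟩ := not_not.1 (mt (simpleT_lt_simpleT_iff a hlt).2 hinv.not_gt)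
      exact .inl ⟨ρ.injective (hx.trans hp.symm), ρ.injective (hy.trans hq.symm)⟩
    · exact .inr ⟨hxy, hgt⟩
  · rintro (⟨rfl, rfl⟩ | ⟨hxy, hgt⟩)
    · exact ⟨hpq, by simp [hp, hq, simpleT]⟩
    · refine ⟨hxy, (simpleT_lt_simpleT_iff a hgt).2 fun ⟨hy, hx⟩ => ?_⟩
      rw [← hp, ρ.injective.eq_iff] at hy
      rw [← hq, ρ.injective.eq_iff] at hx
      exact (hxy.trans (hy ▸ hx ▸ hpq)).false

lemma invCount_simpleT_mul {ρ : Perm (Fin (n+1))} {a : Fin n} {p q : Fin (n+1)} (hpq : p < q)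
    (hp : ρ p = a.castSucc) (hq : ρ q = a.succ) :
    invCount (simpleT a * ρ) = invCount ρ + 1 := by
  rw [invCount, inversions_simpleT_mul hpq hp hq, Finset.card_insert_of_notMem]
  · rfl
  · rw [mem_inversions, hp, hq]
    exact fun h => h.2.not_gt Fin.castSucc_lt_succ

lemma invCount_simpleT_mul_le (a : Fin n) (ρ : Perm (Fin (n+1))) :
    invCount (simpleT a * ρ) ≤ invCount ρ + 1 := by
  set p := ρ.symm a.castSucc
  set q := ρ.symm a.succ
  have hpq : p ≠ q := ρ.symm.injective.ne Fin.castSucc_lt_succ.ne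
  rcases hpq.lt_or_gt with hpq | hqp
  · rw [invCount_simpleT_mul hpq (ρ.apply_symm_apply _) (ρ.apply_symm_apply _)]
  · have := invCount_simpleT_mul (ρ := simpleT a * ρ) (a := a) hqp
      (by simp [q, simpleT]) (by simp [p, simpleT])
    rw [← mul_assoc, simpleT_mul_self, one_mul] at this
    omega

lemma invCount_prod_le_length (l : List (Fin n)) : invCount (l.map simpleT).prod ≤ l.length := by
  induction l with
  | nil => simp [invCount_one]
  | cons a l ih =>
    simpa using (invCount_simpleT_mul_le a _).trans (Nat.add_le_add_right ih 1)

lemma exists_word_length_eq_invCount (σ : Perm (Fin (n+1))) :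
    ∃ l : List (Fin n), l.length = invCount σ ∧ (l.map simpleT).prod = σ := by
  by_cases hσ : σ = 1
  · exact ⟨[], by simp [hσ, invCount_one], by simp [hσ]⟩
  obtain ⟨i, hi⟩ := exists_succ_lt_castSucc (inv_ne_one.2 hσ)
  have hcount : invCount σ = invCount (simpleT i * σ) + 1 := by
    simpa [← mul_assoc, simpleT_mul_self] using
      invCount_simpleT_mul (ρ := simpleT i * σ) (a := i) hi (by simp [simpleT]) (by simp [simpleT])
  obtain ⟨l, hl, hprod⟩ := exists_word_length_eq_invCount (simpleT i * σ)
  exact ⟨i :: l, by simp [hl, hcount], by simp [hprod, ← mul_assoc, simpleT_mul_self]⟩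
termination_by invCount σ

theorem len_eq_invCount (σ : Perm (Fin (n+1))) : len σ = invCount σ := by
  obtain ⟨l, hl, hprod⟩ := exists_word_length_eq_invCount σ
  refine le_antisymm (Nat.sInf_le ⟨l, hl, hprod⟩) (le_csInf ⟨_, l, hl, hprod⟩ ?_)
  rintro _ ⟨l', rfl, rfl⟩
  exact invCount_prod_le_length l'

end SimpleTransposition

lemma contains132.exists_adjacent_values {m : ℕ} {w : Perm (Fin m)} (h : contains132 w) :
    ∃ i₁ i₂ i₃ : Fin m, i₁ < i₂ ∧ i₂ < i₃ ∧ w i₃ < w i₂ ∧ (w i₃ : ℕ) = w i₁ + 1 := by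
  obtain ⟨i₁, i₂, i₃, h12, h23, h13, h32⟩ := h
  induction hd : (w i₃ : ℕ) - w i₁ using Nat.strong_induction_on generalizing i₁ with
  | _ d ih =>
  rw [Fin.lt_def] at h13 h32
  by_cases hgap : (w i₃ : ℕ) = w i₁ + 1
  · exact ⟨i₁, i₂, i₃, h12, h23, h32, hgap⟩
  -- the value `w i₁ + 1` sits before `i₂` (a 132 with a smaller gap) or after it (done)
  obtain ⟨k, hk⟩ := w.surjective ⟨w i₁ + 1, by omega⟩
  have hk' : (w k : ℕ) = w i₁ + 1 := by rw [hk]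
  rcases lt_trichotomy k i₂ with hlt | rfl | hgt
  · exact ih _ (by omega) k hlt (by rw [Fin.lt_def]; omega) rfl
  · omega
  · exact ⟨i₁, i₂, k, h12, hgt, by rw [Fin.lt_def]; omega, hk'⟩

/-- The maximal-length element of any parabolic quotient avoids the pattern 132. -/
theorem maximal_element_parabolic_avoids_132 {n : ℕ} (J : Set (Fin n))
    (w : Equiv.Perm (Fin (n+1))) (hw : w ∈ parabolicQuotient J)
    (hmax : ∀ σ ∈ parabolicQuotient J, len σ ≤ len w) :
    ¬ contains132 w := by
  intro h132
  obtain ⟨i₁, i₂, i₃, h12, h23, -, hval⟩ := h132.exists_adjacent_values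
  let a : Fin n := ⟨w i₁, by have := (w i₃).isLt; omega⟩
  have ha₁ : w i₁ = a.castSucc := Fin.ext rfl
  have ha₃ : w i₃ = a.succ := Fin.ext hval
  have hmem : simpleT a * w ∈ parabolicQuotient J := by
    refine simpleT_mul_mem_parabolicQuotient hw fun i h₁ h₃ => ?_
    rw [← ha₁, w.injective.eq_iff] at h₁
    rw [← ha₃, w.injective.eq_iff] at h₃
    rw [Fin.lt_def, ← h₁] at h12
    rw [Fin.lt_def, ← h₃] at h23
    simp only [Fin.val_castSucc, Fin.val_succ] at h12 h23
    omega
  have hlonger := hmax _ hmem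
  rw [len_eq_invCount, len_eq_invCount, invCount_simpleT_mul (h12.trans h23) ha₁ ha₃] at hlonger
  omega
end

section
/- Let π ∈ S_n avoid the pattern 132, let σ ≤ π in the right weak order, and suppose the swap s_i is forbidden, i.e., σs_i is not in the interval [e, π] of the right weak order. Then ℓ(σs_i) = ℓ(σ) + 1, and the set A_i = {σ_k : k > i+1, min(σ_i, σ_{i+1}) < σ_k < max(σ_i, σ_{i+1})} is empty. -/
/-!
Weak order is inclusion of inversion sets, and length is the number of inversions. Since
`σ ≤ π` but `σ sᵢ ≰ π`, position `i` is an ascent of `σ` (a descent would give `σ sᵢ ≤ σ`), and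
`π` keeps `σᵢ` before `σᵢ₊₁`: otherwise `Inv(σ sᵢ) = Inv(σ) ∪ {(σᵢ, σᵢ₊₁)} ⊆ Inv(π)`. If some
`k > i + 1` had `σᵢ < σₖ < σᵢ₊₁`, then `(σₖ, σᵢ₊₁)` would be an inversion of `σ`, hence of `π`,
so `σᵢ, σᵢ₊₁, σₖ` would occur in this order in `π` and form a 132 pattern.
-/

open Equiv

/-- Cover relation of the right weak Bruhat order. -/
def weakCov {n : ℕ} (σ τ : Equiv.Perm (Fin (n+1))) : Prop :=
  ∃ i : Fin n, τ = σ * simpleT i ∧ len τ = len σ + 1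

/-- The right weak Bruhat order. -/
def weakLE {n : ℕ} : Equiv.Perm (Fin (n+1)) → Equiv.Perm (Fin (n+1)) → Prop :=
  Relation.ReflTransGen weakCov

lemma eq_one_of_monotone {α : Type*} [LinearOrder α] [Finite α] {σ : Perm α}
    (h : Monotone σ) : σ = 1 :=
  Equiv.ext fun _ => (h.strictMono_of_injective σ.injective).apply_eq

section Inversions

variable {α : Type*} [Fintype α] [LinearOrder α]

/-- Inversions are recorded by their values: `(a, b)` with `a < b` and `b` placed before `a`. -/
def inversions (σ : Perm α) : Finset (α × α) :=
  {p | p.1 < p.2 ∧ σ⁻¹ p.2 < σ⁻¹ p.1}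

variable {σ π : Perm α} {a b : α}

@[simp]
lemma mem_inversions : (a, b) ∈ inversions σ ↔ a < b ∧ σ⁻¹ b < σ⁻¹ a := by
  simp [inversions]

lemma inv_apply_lt_of_notMem_inversions (hab : a < b) (h : (a, b) ∉ inversions π) :
    π⁻¹ a < π⁻¹ b :=
  lt_of_le_of_ne (not_lt.1 fun h' => h (mem_inversions.2 ⟨hab, h'⟩))
    (π⁻¹.injective.ne hab.ne)

@[simp]
lemma inversions_one : inversions (1 : Perm α) = ∅ := by
  ext ⟨a, b⟩
  simpa using le_of_lt

end Inversions

lemma simpleT_lt_simpleT_iff_s5 {n : ℕ} (i : Fin n) (p q : Fin (n+1)) :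
    simpleT i p < simpleT i q ↔
      (p < q ∧ ¬(p = i.castSucc ∧ q = i.succ)) ∨ (p = i.succ ∧ q = i.castSucc) := by
  simp only [simpleT, swap_apply_def, Fin.lt_def, Fin.ext_iff, Fin.val_castSucc, Fin.val_succ]
  split_ifs <;> simp_all <;> omega

section Fin

variable {n : ℕ} {σ π : Perm (Fin (n+1))} {i : Fin n}

lemma exists_descent_of_ne_one (h : σ ≠ 1) : ∃ i : Fin n, σ i.succ < σ i.castSucc := by
  contrapose! h
  exact eq_one_of_monotone (Fin.monotone_iff_le_succ.2 h)

lemma lt_or_gt_apply_castSucc_apply_succ (σ : Perm (Fin (n+1))) (i : Fin n) :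
    σ i.castSucc < σ i.succ ∨ σ i.succ < σ i.castSucc :=
  lt_or_gt_of_ne (σ.injective.ne Fin.castSucc_lt_succ.ne)

lemma mul_simpleT_apply_castSucc_lt (h : σ i.succ < σ i.castSucc) :
    (σ * simpleT i) i.castSucc < (σ * simpleT i) i.succ := by
  simpa [simpleT] using h

lemma mul_simpleT_mul_simpleT (σ : Perm (Fin (n+1))) (i : Fin n) :
    σ * simpleT i * simpleT i = σ := by
  rw [mul_assoc, simpleT, swap_mul_self, mul_one]

lemma inversions_mul_simpleT (h : σ i.castSucc < σ i.succ) :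
    inversions (σ * simpleT i) = insert (σ i.castSucc, σ i.succ) (inversions σ) := by
  ext ⟨a, b⟩
  rw [Finset.mem_insert, mem_inversions, mem_inversions, mul_inv_rev, simpleT, swap_inv,
    Perm.mul_apply, Perm.mul_apply, ← simpleT, simpleT_lt_simpleT_iff_s5, Prod.mk.injEq,
    Perm.inv_eq_iff_eq, Perm.inv_eq_iff_eq, Perm.inv_eq_iff_eq, Perm.inv_eq_iff_eq]
  constructor
  · rintro ⟨hab, ⟨hlt, -⟩ | ⟨hb, ha⟩⟩
    · exact Or.inr ⟨hab, hlt⟩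
    · exact Or.inl ⟨ha, hb⟩
  · rintro (⟨ha, hb⟩ | ⟨hab, hlt⟩)
    · exact ⟨by simpa [ha, hb] using h, Or.inr ⟨hb, ha⟩⟩
    · refine ⟨hab, Or.inl ⟨hlt, fun ⟨hb, ha⟩ => hab.not_gt ?_⟩⟩
      simpa [ha, hb] using h

lemma card_inversions_mul_simpleT_of_lt (h : σ i.castSucc < σ i.succ) :
    (inversions (σ * simpleT i)).card = (inversions σ).card + 1 := by
  rw [inversions_mul_simpleT h, Finset.card_insert_of_notMem]
  simp [Fin.castSucc_lt_succ.le]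

lemma card_inversions_mul_simpleT_of_gt (h : σ i.succ < σ i.castSucc) :
    (inversions σ).card = (inversions (σ * simpleT i)).card + 1 := by
  simpa only [mul_simpleT_mul_simpleT] using
    card_inversions_mul_simpleT_of_lt (mul_simpleT_apply_castSucc_lt h)

lemma card_inversions_prod_le (l : List (Fin n)) :
    (inversions (l.map simpleT).prod).card ≤ l.length := by
  induction l using List.reverseRecOn with
  | nil => simp
  | append_singleton l i ih =>
    simp only [List.map_append, List.prod_append, List.map_singleton, List.prod_singleton,
      List.length_append, List.length_singleton]
    rcases lt_or_gt_apply_castSucc_apply_succ (l.map simpleT).prod i with h | h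
    · rw [card_inversions_mul_simpleT_of_lt h]; omega
    · have := card_inversions_mul_simpleT_of_gt h; omega

lemma exists_word_length_eq_card_inversions (σ : Perm (Fin (n+1))) :
    ∃ l : List (Fin n), l.length = (inversions σ).card ∧ (l.map simpleT).prod = σ := by
  induction h : (inversions σ).card generalizing σ with
  | zero =>
    refine ⟨[], rfl, by_contra fun hσ => ?_⟩
    obtain ⟨i, hi⟩ := exists_descent_of_ne_one (Ne.symm hσ)
    have := card_inversions_mul_simpleT_of_gt hi
    omega
  | succ k ih =>
    obtain ⟨i, hi⟩ := exists_descent_of_ne_one (σ := σ) (by rintro rfl; simp at h)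
    have hcard := card_inversions_mul_simpleT_of_gt hi
    obtain ⟨l, hl, hprod⟩ := ih (σ * simpleT i) (by omega)
    refine ⟨l ++ [i], by simp [hl], ?_⟩
    rw [List.map_append, List.prod_append, hprod, List.map_singleton, List.prod_singleton,
      mul_simpleT_mul_simpleT]

lemma len_eq_card_inversions (σ : Perm (Fin (n+1))) : len σ = (inversions σ).card := by
  obtain ⟨l, hl, hprod⟩ := exists_word_length_eq_card_inversions σ
  refine le_antisymm (Nat.sInf_le ⟨l, hl, hprod⟩) (le_csInf ⟨_, l, hl, hprod⟩ ?_)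
  rintro _ ⟨l', rfl, rfl⟩
  exact card_inversions_prod_le l'

lemma len_mul_simpleT_of_lt (h : σ i.castSucc < σ i.succ) :
    len (σ * simpleT i) = len σ + 1 := by
  rw [len_eq_card_inversions, len_eq_card_inversions, card_inversions_mul_simpleT_of_lt h]

lemma weakCov_mul_simpleT (h : σ i.castSucc < σ i.succ) : weakCov σ (σ * simpleT i) :=
  ⟨i, rfl, len_mul_simpleT_of_lt h⟩

lemma weakCov_mul_simpleT_of_gt (h : σ i.succ < σ i.castSucc) : weakCov (σ * simpleT i) σ := by
  simpa only [mul_simpleT_mul_simpleT] using weakCov_mul_simpleT (mul_simpleT_apply_castSucc_lt h)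

lemma exists_ascent_of_weakCov {τ : Perm (Fin (n+1))} (h : weakCov σ τ) :
    ∃ i : Fin n, σ i.castSucc < σ i.succ ∧ τ = σ * simpleT i := by
  obtain ⟨i, rfl, hlen⟩ := h
  refine ⟨i, (lt_or_gt_apply_castSucc_apply_succ σ i).resolve_right fun hi => ?_, rfl⟩
  rw [len_eq_card_inversions, len_eq_card_inversions] at hlen
  have := card_inversions_mul_simpleT_of_gt hi
  omega

lemma inversions_subset_of_weakLE (h : weakLE σ π) : inversions σ ⊆ inversions π := by
  induction h with
  | refl => exact subset_rfl
  | tail _ hcov ih =>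
    obtain ⟨i, hi, rfl⟩ := exists_ascent_of_weakCov hcov
    rw [inversions_mul_simpleT hi]
    exact ih.trans (Finset.subset_insert _ _)

/-- If `π⁻¹ σ` is not the identity it has a descent `i`; since every inversion of `σ` is one
of `π`, the values at `i`, `i + 1` cannot be an inversion of `σ`, so `i` is an ascent of `σ` that
`π` inverts. -/
lemma exists_mem_inversions_of_subset (hsub : inversions σ ⊆ inversions π) (hne : σ ≠ π) :
    ∃ i : Fin n, (σ i.castSucc, σ i.succ) ∈ inversions π := by
  obtain ⟨i, hi⟩ := exists_descent_of_ne_one (σ := π⁻¹ * σ)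
    (by rwa [ne_eq, inv_mul_eq_one, eq_comm])
  refine ⟨i, mem_inversions.2 ⟨?_, hi⟩⟩
  refine (lt_or_gt_apply_castSucc_apply_succ σ i).resolve_right fun hdesc => hi.not_gt ?_
  exact (mem_inversions.1 (hsub (mem_inversions.2 ⟨hdesc, by simp⟩))).2

lemma inversions_mul_simpleT_subset (hsub : inversions σ ⊆ inversions π)
    (hi : (σ i.castSucc, σ i.succ) ∈ inversions π) : inversions (σ * simpleT i) ⊆ inversions π := by
  rw [inversions_mul_simpleT (mem_inversions.1 hi).1]
  exact Finset.insert_subset hi hsub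

lemma weakLE_of_inversions_subset {σ π : Perm (Fin (n+1))}
    (hsub : inversions σ ⊆ inversions π) : weakLE σ π := by
  by_cases hσπ : σ = π
  · exact hσπ ▸ .refl
  obtain ⟨i, hi⟩ := exists_mem_inversions_of_subset hsub hσπ
  have hasc := (mem_inversions.1 hi).1
  have hsub' := inversions_mul_simpleT_subset hsub hi
  have := Finset.card_le_card hsub'
  have := card_inversions_mul_simpleT_of_lt hasc
  exact .head (weakCov_mul_simpleT hasc) (weakLE_of_inversions_subset hsub')
termination_by (inversions π).card - (inversions σ).card

end Fin

/-- If `π` avoids 132, `σ ≤ π` in the right weak order, and the swap `sᵢ` is forbidden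
(`σ sᵢ ∉ [e, π]`), then `ℓ(σ sᵢ) = ℓ(σ) + 1` and the set `Aᵢ` is empty. -/
theorem forbidden_swap_length_and_A_empty {n : ℕ} (π σ : Equiv.Perm (Fin (n+1)))
    (i : Fin n) (hπ : ¬ contains132 π) (hσπ : weakLE σ π)
    (hforb : ¬ weakLE (σ * simpleT i) π) :
    len (σ * simpleT i) = len σ + 1 ∧
      ∀ k : Fin (n+1), (i : ℕ) + 1 < (k : ℕ) →
        ¬(min (σ i.castSucc) (σ i.succ) < σ k ∧ σ k < max (σ i.castSucc) (σ i.succ)) := by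
  have hasc : σ i.castSucc < σ i.succ := (lt_or_gt_apply_castSucc_apply_succ σ i).resolve_right
    fun hdesc => hforb (.head (weakCov_mul_simpleT_of_gt hdesc) hσπ)
  refine ⟨len_mul_simpleT_of_lt hasc, ?_⟩
  rintro k hik ⟨hlo, hhi⟩
  rw [min_eq_left hasc.le] at hlo
  rw [max_eq_right hasc.le] at hhi
  have hsub := inversions_subset_of_weakLE hσπ
  have hpair : (σ i.castSucc, σ i.succ) ∉ inversions π := fun hmem =>
    hforb (weakLE_of_inversions_subset (inversions_mul_simpleT_subset hsub hmem))
  have hk : (σ k, σ i.succ) ∈ inversions π :=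
    hsub (mem_inversions.2 ⟨hhi, by simpa [Fin.lt_def] using hik⟩)
  exact hπ ⟨π⁻¹ (σ i.castSucc), π⁻¹ (σ i.succ), π⁻¹ (σ k),
    inv_apply_lt_of_notMem_inversions hasc hpair, (mem_inversions.1 hk).2, by simpa, by simpa⟩
end

section
/- Let π ∈ S_n avoid the pattern 132, let σ ≤ π in the right weak order, and suppose σs_i is not ≤ π in the right weak order. Then the set B_i = {σ_k : k > i+1, min(π⁻¹σ_i, π⁻¹σ_{i+1}) < π⁻¹σ_k < max(π⁻¹σ_i, π⁻¹σ_{i+1})} is empty. -/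
open Equiv

/-- The inversion set of `σ`: pairs of values `(σ i, σ j)` with `i < j` and `σ i > σ j`. -/
def invSet {m : ℕ} (σ : Equiv.Perm (Fin m)) : Set (Fin m × Fin m) :=
  {p | ∃ i j : Fin m, i < j ∧ σ j < σ i ∧ p = (σ i, σ j)}

/-- The right weak Bruhat order, characterized by containment of inversion sets. -/
def wle {m : ℕ} (σ π : Equiv.Perm (Fin m)) : Prop := invSet σ ⊆ invSet π

/-! Write `a = σ i`, `b = σ (i+1)`. The only inversion that `σ sᵢ` can have beyond those of `σ`
is `(b, a)`, so `σ sᵢ ≰ π` forces `a < b` with `a` before `b` in `π`. A value `c = σ k` with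
`k > i + 1` lying strictly between `a` and `b` in `π` is impossible: if `c < b` then `(b, c)` is an
inversion of `σ`, hence of `π`, putting `c` after `b`; if `c > b` then `a, c, b` is a 132 pattern
in `π`. -/

lemma mem_invSet {m : ℕ} (σ : Equiv.Perm (Fin m)) (u v : Fin m) :
    (u, v) ∈ invSet σ ↔ σ.symm u < σ.symm v ∧ v < u := by
  constructor
  · rintro ⟨a, b, hab, hba, h⟩
    obtain ⟨rfl, rfl⟩ := Prod.ext_iff.1 h
    simp [hab, hba]
  · rintro ⟨h, hvu⟩
    exact ⟨σ.symm u, σ.symm v, h, by simpa using hvu, by simp⟩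

lemma simpleT_lt_simpleT {n : ℕ} (i : Fin n) {x y : Fin (n+1)} (h : x < y)
    (hne : ¬(x = i.castSucc ∧ y = i.succ)) : simpleT i x < simpleT i y := by
  rw [Fin.lt_def] at h ⊢
  simp only [Fin.ext_iff, Fin.val_castSucc, Fin.val_succ] at hne
  simp only [simpleT, Equiv.swap_apply_def]
  split_ifs <;> simp_all [Fin.ext_iff] <;> omega

lemma invSet_mul_simpleT_subset {n : ℕ} (σ : Equiv.Perm (Fin (n+1))) (i : Fin n) :
    invSet (σ * simpleT i) ⊆ insert (σ i.succ, σ i.castSucc) (invSet σ) := by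
  rintro _ ⟨x, y, hxy, hyx, rfl⟩
  by_cases hxy' : x = i.castSucc ∧ y = i.succ
  · obtain ⟨rfl, rfl⟩ := hxy'
    left
    simp [simpleT]
  · exact Or.inr ⟨simpleT i x, simpleT i y, simpleT_lt_simpleT i hxy hxy', hyx, rfl⟩

lemma mem_invSet_mul_simpleT_of_not_wle {n : ℕ} {π σ : Equiv.Perm (Fin (n+1))} {i : Fin n}
    (hσπ : wle σ π) (hforb : ¬ wle (σ * simpleT i) π) :
    (σ i.succ, σ i.castSucc) ∈ invSet (σ * simpleT i) \ invSet π := by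
  obtain ⟨p, hp, hpπ⟩ := Set.not_subset.1 hforb
  rcases invSet_mul_simpleT_subset σ i hp with rfl | hpσ
  · exact ⟨hp, hpπ⟩
  · exact absurd (hσπ hpσ) hpπ

/-- If `π` avoids 132, `σ ≤ π` in the right weak order, and `σ sᵢ ≰ π`, then the set
`Bᵢ = {σ_k : k > i+1, min(π⁻¹σᵢ, π⁻¹σᵢ₊₁) < π⁻¹σ_k < max(π⁻¹σᵢ, π⁻¹σᵢ₊₁)}` is empty. -/
theorem forbidden_swap_B_empty {n : ℕ} (π σ : Equiv.Perm (Fin (n+1))) (i : Fin n)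
    (hπ : ¬ contains132 π) (hσπ : wle σ π) (hforb : ¬ wle (σ * simpleT i) π) :
    ∀ k : Fin (n+1), (i : ℕ) + 1 < (k : ℕ) →
      ¬(min (π.symm (σ i.castSucc)) (π.symm (σ i.succ)) < π.symm (σ k) ∧
        π.symm (σ k) < max (π.symm (σ i.castSucc)) (π.symm (σ i.succ))) := by
  intro k hk ⟨hlo, hhi⟩
  obtain ⟨hmem, hnotπ⟩ := mem_invSet_mul_simpleT_of_not_wle hσπ hforb
  have hab : σ i.castSucc < σ i.succ := ((mem_invSet _ _ _).1 hmem).2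
  have hpos : π.symm (σ i.castSucc) < π.symm (σ i.succ) := by
    rw [mem_invSet, not_and'] at hnotπ
    exact lt_of_le_of_ne (not_lt.1 (hnotπ hab)) (by simpa using hab.ne)
  rw [min_eq_left hpos.le] at hlo
  rw [max_eq_right hpos.le] at hhi
  have hik : i.succ < k := Fin.lt_def.2 hk
  rcases lt_or_gt_of_ne (σ.injective.ne hik.ne') with hkb | hbk
  · exact hhi.not_gt ((mem_invSet π _ _).1 (hσπ ⟨i.succ, k, hik, hkb, rfl⟩)).1
  · exact hπ ⟨_, _, _, hlo, hhi, by simpa using hab, by simpa using hbk⟩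
end

section
/- Let π ∈ S_n avoid 132 and let σ ≤ π in the right weak order. Fix k and define points P_i = (σ_i, π⁻¹σ_i) for i = 1, ..., n. Then no point P_i with i < k satisfies both σ_i > σ_k and π⁻¹σ_i > π⁻¹σ_k (i.e., no point of the permutation path lies strictly in 'Quadrant I' relative to P_k). -/
open Equiv

theorem mem_invSet_iff {m : ℕ} (π : Perm (Fin m)) (x y : Fin m) :
    (x, y) ∈ invSet π ↔ π.symm x < π.symm y ∧ y < x := by
  constructor
  · rintro ⟨i, j, hij, hji, hxy⟩
    obtain ⟨rfl, rfl⟩ := Prod.ext_iff.mp hxy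
    simpa using ⟨hij, hji⟩
  · rintro ⟨hxy, hyx⟩
    exact ⟨π.symm x, π.symm y, hxy, by simpa using hyx, by simp⟩

theorem no_point_in_quadrant_I_general {n : ℕ} (π σ : Equiv.Perm (Fin n))
    (hσπ : wle σ π) (k : Fin n) :
    ∀ i : Fin n, i < k → ¬(σ k < σ i ∧ π.symm (σ k) < π.symm (σ i)) := by
  rintro i hik ⟨hσ, hπ⟩
  have hinv : (σ i, σ k) ∈ invSet π :=
    hσπ ((mem_invSet_iff σ _ _).2 ⟨by simpa using hik, hσ⟩)
  exact lt_asymm ((mem_invSet_iff π _ _).1 hinv).1 hπ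

/-- No point of the permutation path lies strictly in Quadrant I relative to
`(σ_k, π⁻¹σ_k)`. -/
theorem no_point_in_quadrant_I {n : ℕ} (π σ : Equiv.Perm (Fin n))
    (hπ : ¬ contains132 π) (hσπ : wle σ π) (k : Fin n) :
    ∀ i : Fin n, i < k → ¬(σ k < σ i ∧ π.symm (σ k) < π.symm (σ i)) :=
  no_point_in_quadrant_I_general π σ hσπ k
end

section
/- Let π ∈ S_n avoid 132 and σ ≤ π in the right weak order. Then for any index i with 1 ≤ i ≤ n-1, if σ_{i+1} < σ_i then π⁻¹σ_{i+1} > π⁻¹σ_i; equivalently, no consecutive step of the permutation path (σ_i, π⁻¹σ_i) → (σ_{i+1}, π⁻¹σ_{i+1}) points down and to the left. -/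
open Equiv

/-- No step of the permutation path points down and to the left: if `σ_{i+1} < σ_i`
then `π⁻¹σ_{i+1} > π⁻¹σ_i`. -/
theorem no_step_down_left {n : ℕ} (π σ : Equiv.Perm (Fin (n+1)))
    (hπ : ¬ contains132 π) (hσπ : wle σ π) (i : Fin n) :
    σ i.succ < σ i.castSucc → π.symm (σ i.castSucc) < π.symm (σ i.succ) := by
  intro h
  have hm : (σ i.castSucc, σ i.succ) ∈ invSet σ :=
    ⟨i.castSucc, i.succ, Fin.castSucc_lt_succ (i := i), h, rfl⟩
  obtain ⟨a, b, hab, _, heq⟩ := hσπ hm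
  have h1 : σ i.castSucc = π a := congrArg Prod.fst heq
  have h2 : σ i.succ = π b := congrArg Prod.snd heq
  rw [h1, h2, Equiv.symm_apply_apply, Equiv.symm_apply_apply]
  exact hab
end

section
/- Let V be a finite-dimensional complex vector space and let E, H ∈ End(V). There is at most one F ∈ End(V) such that the assignment e ↦ E, f ↦ F, h ↦ H defines a representation of sl_2(ℂ) on V (i.e., such that EF - FE = H, HE - EH = 2E, HF - FH = -2F). -/
attribute [local instance] LieRing.ofAssociativeRing

namespace IsSl2Triple

lemma of_mul_sub_mul {R A : Type*} [CommRing R] [Ring A] [Algebra R A] {h e f : A} (hh : h ≠ 0)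
    (hef : e * f - f * e = h) (hhe : h * e - e * h = (2 : R) • e)
    (hhf : h * f - f * h = (-2 : R) • f) : IsSl2Triple h e f where
  h_ne_zero := hh
  lie_e_f := by rw [Ring.lie_def, hef]
  lie_h_e_nsmul := by rw [Ring.lie_def, hhe, ofNat_smul_eq_nsmul]
  lie_h_f_nsmul := by rw [Ring.lie_def, hhf, neg_smul, ofNat_smul_eq_nsmul]

variable {R L : Type*} [CommRing R] [IsDomain R] [CharZero R] [LieRing L] [LieAlgebra R L]
  {h e f : L}

lemma eq_zero_of_lie_e_eq_zero {M : Type*} [AddCommGroup M] [Module R M] [LieRingModule L M]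
    [LieModule R L M] [IsNoetherian R M] [Module.IsTorsionFree R M] (t : IsSl2Triple h e f)
    {m : M} {μ : R} (hμ : ∀ n : ℕ, μ ≠ n) (he : ⁅e, m⁆ = 0) (hh : ⁅h, m⁆ = μ • m) :
    m = 0 := by
  by_contra hm
  obtain ⟨n, hn⟩ := (⟨hm, hh, he⟩ : t.HasPrimitiveVectorWith m μ).exists_nat
  exact hμ n hn

/-- `f₁ - f₂` is killed by `ad e` and has `ad h`-weight `-2`, which is not a natural number. -/
lemma f_unique [IsNoetherian R L] [Module.IsTorsionFree R L] {f₁ f₂ : L}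
    (t₁ : IsSl2Triple h e f₁) (t₂ : IsSl2Triple h e f₂) : f₁ = f₂ := by
  rw [← sub_eq_zero]
  refine t₁.eq_zero_of_lie_e_eq_zero (μ := (-2 : R)) (fun n hn => ?_) ?_ ?_
  · have : (-2 : ℤ) = n := by exact_mod_cast hn
    omega
  · rw [lie_sub, t₁.lie_e_f, t₂.lie_e_f, sub_self]
  · rw [lie_sub, t₁.lie_lie_smul_f R, t₂.lie_lie_smul_f R]
    module

end IsSl2Triple

/-- Given `E, H ∈ End(V)` with `V` finite-dimensional, there is at most one `F` making
`(E, F, H)` an `𝔰𝔩₂(ℂ)`-triple. -/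
theorem sl2_lowering_operator_unique
    (V : Type*) [AddCommGroup V] [Module ℂ V] [FiniteDimensional ℂ V]
    (E H F₁ F₂ : Module.End ℂ V)
    (hEF₁ : E * F₁ - F₁ * E = H)
    (hHE₁ : H * E - E * H = (2 : ℂ) • E)
    (hHF₁ : H * F₁ - F₁ * H = (-2 : ℂ) • F₁)
    (hEF₂ : E * F₂ - F₂ * E = H)
    (hHF₂ : H * F₂ - F₂ * H = (-2 : ℂ) • F₂) :
    F₁ = F₂ := by
  rcases eq_or_ne H 0 with rfl | hH
  · simp only [zero_mul, mul_zero, sub_zero, eq_comm, smul_eq_zero] at hHF₁ hHF₂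
    rw [hHF₁.resolve_left (by norm_num), hHF₂.resolve_left (by norm_num)]
  have t₁ := IsSl2Triple.of_mul_sub_mul hH hEF₁ hHE₁ hHF₁
  have t₂ := IsSl2Triple.of_mul_sub_mul hH hEF₂ hHE₁ hHF₂
  exact t₁.f_unique (R := ℂ) t₂
end

section
/- Let V be a finite-dimensional representation of sl_2(ℂ), and for k ∈ ℤ let V[k] be the k-eigenspace of h. Then for each k ≥ 0 the map f^k : V[k] → V[-k] is a linear isomorphism. -/
/-!
`F ^ k` is injective on `V[k]`: if `v ∈ V[k]` and `F ^ k v = 0`, then `E v ∈ V[k + 2]` is killed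
by `F ^ (k + 2)` by the identity `e f^(n+1) = f^(n+1) e + (n+1) f^n (h - n)`, and since `E` is
nilpotent on weight vectors, induction shows `E v = 0`. For a primitive vector `v ≠ 0` of weight
`k` the same identity gives `F ^ i v ≠ 0` for `i ≤ k`, so `v = 0`. The relations are symmetric
under `(E, F, H) ↦ (F, E, -H)`, so `E ^ k` is injective from `V[-k]` to `V[k]`; the two
eigenspaces therefore have the same dimension and the injection `F ^ k` is bijective.
-/

open Module Module.End Set

lemma Module.End.eigenspace_neg {R M : Type*} [CommRing R] [AddCommGroup M] [Module R M]
    (f : End R M) (μ : R) : (-f).eigenspace μ = f.eigenspace (-μ) := by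
  ext v
  simp only [mem_eigenspace_iff, LinearMap.neg_apply, neg_smul, neg_eq_iff_eq_neg]

/-- `A ^ n v` would be an eigenvector for the pairwise distinct eigenvalues `μ + n c`, but `H` has
only finitely many eigenvalues. -/
lemma Module.End.exists_pow_apply_eq_zero_of_mapsTo_eigenspace {K V : Type*} [Field K]
    [CharZero K] [AddCommGroup V] [Module K V] [FiniteDimensional K V] {H A : End K V} {c : K}
    (hc : c ≠ 0) (hA : ∀ μ, MapsTo A (H.eigenspace μ) (H.eigenspace (μ + c)))
    {μ : K} {v : V} (hv : v ∈ H.eigenspace μ) : ∃ n : ℕ, (A ^ n) v = 0 := by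
  have hpow : ∀ n : ℕ, (A ^ n) v ∈ H.eigenspace (μ + n * c) := by
    intro n
    induction n with
    | zero => simpa using hv
    | succ n ih =>
      rw [pow_succ', mul_apply, Nat.cast_succ, add_one_mul, ← add_assoc]
      exact hA _ ih
  by_contra! hne
  refine Set.infinite_of_injective_forall_mem (f := fun n : ℕ => μ + n * c) ?_
    (fun n => hasEigenvalue_of_hasEigenvector ⟨hpow n, hne n⟩) H.finite_hasEigenvalue
  intro a b hab
  simpa [hc] using hab

/-- `E, F, H` are the images of `e, f, h` under a representation of `𝔰𝔩₂`; unlike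
`IsSl2Triple`, this allows `H = 0`. -/
structure IsSl2Action {R V : Type*} [CommRing R] [AddCommGroup V] [Module R V]
    (E F H : End R V) : Prop where
  lie_e_f : E * F - F * E = H
  lie_h_e : H * E - E * H = (2 : R) • E
  lie_h_f : H * F - F * H = (-2 : R) • F

namespace IsSl2Action

section CommRing

variable {R V : Type*} [CommRing R] [AddCommGroup V] [Module R V] {E F H : End R V}

lemma symm (hs : IsSl2Action E F H) : IsSl2Action F E (-H) where
  lie_e_f := by rw [← hs.lie_e_f]; abel
  lie_h_e := by
    rw [neg_mul, mul_neg, sub_neg_eq_add, neg_add_eq_sub, ← neg_sub, hs.lie_h_f, ← neg_smul, neg_neg]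
  lie_h_f := by
    rw [neg_mul, mul_neg, sub_neg_eq_add, neg_add_eq_sub, ← neg_sub, hs.lie_h_e, ← neg_smul]

lemma e_f_apply (hs : IsSl2Action E F H) (v : V) : E (F v) = F (E v) + H v := by
  rw [← hs.lie_e_f]
  simp

lemma h_e_apply (hs : IsSl2Action E F H) (v : V) : H (E v) = E (H v) + (2 : R) • E v := by
  have := congr($hs.lie_h_e v)
  simp only [LinearMap.sub_apply, mul_apply, LinearMap.smul_apply] at this
  linear_combination (norm := module) this

lemma h_f_apply (hs : IsSl2Action E F H) (v : V) : H (F v) = F (H v) - (2 : R) • F v := by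
  have := congr($hs.lie_h_f v)
  simp only [LinearMap.sub_apply, mul_apply, LinearMap.smul_apply] at this
  linear_combination (norm := module) this

lemma mapsTo_e (hs : IsSl2Action E F H) (μ : R) :
    MapsTo E (H.eigenspace μ) (H.eigenspace (μ + 2)) := by
  intro v hv
  rw [SetLike.mem_coe, mem_eigenspace_iff] at hv ⊢
  rw [hs.h_e_apply, hv, map_smul, add_smul]

lemma mapsTo_f (hs : IsSl2Action E F H) (μ : R) :
    MapsTo F (H.eigenspace μ) (H.eigenspace (μ - 2)) := by
  intro v hv
  rw [SetLike.mem_coe, mem_eigenspace_iff] at hv ⊢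
  rw [hs.h_f_apply, hv, map_smul, sub_smul]

lemma mapsTo_f_pow (hs : IsSl2Action E F H) (μ : R) (n : ℕ) :
    MapsTo (F ^ n) (H.eigenspace μ) (H.eigenspace (μ - 2 * n)) := by
  induction n with
  | zero => intro v hv; simpa using hv
  | succ n ih =>
    rw [pow_succ', mul_eq_comp, LinearMap.coe_comp, Nat.cast_succ, mul_add_one, ← sub_sub]
    exact (hs.mapsTo_f _).comp ih

lemma mapsTo_f_pow_eigenspace_neg (hs : IsSl2Action E F H) (k : ℕ) :
    MapsTo (F ^ k) (H.eigenspace (k : R)) (H.eigenspace (-(k : R))) := by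
  convert hs.mapsTo_f_pow (k : R) k using 3
  ring

lemma e_f_pow_succ_apply (hs : IsSl2Action E F H) {μ : R} {v : V} (hv : v ∈ H.eigenspace μ)
    (n : ℕ) : E ((F ^ (n + 1)) v) = (F ^ (n + 1)) (E v) + ((n + 1) * (μ - n)) • (F ^ n) v := by
  induction n with
  | zero => simp [hs.e_f_apply, mem_eigenspace_iff.mp hv]
  | succ n ih =>
    have hw := mem_eigenspace_iff.mp (hs.mapsTo_f_pow μ (n + 1) hv)
    rw [pow_succ' F (n + 1), mul_apply, hs.e_f_apply, ih, hw, map_add, map_smul, ← mul_apply,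
      ← pow_succ', ← mul_apply F (F ^ n), ← pow_succ']
    push_cast
    module

end CommRing

section Field

variable {K V : Type*} [Field K] [CharZero K] [AddCommGroup V] [Module K V] {E F H : End K V}

lemma f_pow_apply_ne_zero_of_e_apply_eq_zero (hs : IsSl2Action E F H) {n : ℕ} {v : V}
    (hv : v ∈ H.eigenspace (n : K)) (hE : E v = 0) (hv₀ : v ≠ 0) {i : ℕ} (hi : i ≤ n) :
    (F ^ i) v ≠ 0 := by
  induction i with
  | zero => simpa using hv₀
  | succ i ih =>
    intro hF
    have hcoeff := hs.e_f_pow_succ_apply hv i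
    rw [hF, hE, map_zero, map_zero, zero_add, eq_comm] at hcoeff
    have hn : (n : K) - i ≠ 0 := sub_ne_zero.mpr (by exact_mod_cast (Nat.lt_of_succ_le hi).ne')
    exact ih (Nat.le_of_succ_le hi)
      ((smul_eq_zero.mp hcoeff).resolve_left (mul_ne_zero (Nat.cast_add_one_ne_zero i) hn))

lemma eq_zero_of_f_pow_apply_eq_zero_of_e_pow_apply_eq_zero (hs : IsSl2Action E F H) {N k : ℕ}
    {v : V} (hv : v ∈ H.eigenspace (k : K)) (hF : (F ^ k) v = 0) (hE : (E ^ N) v = 0) :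
    v = 0 := by
  induction N generalizing k v with
  | zero => simpa using hE
  | succ N ih =>
    have hF₁ : (F ^ (k + 1)) v = 0 := by rw [pow_succ', mul_apply, hF, map_zero]
    have hF₂ : (F ^ (k + 2)) v = 0 := by rw [pow_succ', mul_apply, hF₁, map_zero]
    have hEv : E v ∈ H.eigenspace ((k + 2 : ℕ) : K) := by
      push_cast
      exact hs.mapsTo_e _ hv
    have hFEv : (F ^ (k + 2)) (E v) = 0 := by
      simpa [hF₁, hF₂] using (hs.e_f_pow_succ_apply hv (k + 1)).symm
    have hEv₀ : E v = 0 := ih hEv hFEv (by rwa [← mul_apply, ← pow_succ])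
    by_contra hv₀
    exact hs.f_pow_apply_ne_zero_of_e_apply_eq_zero hv hEv₀ hv₀ le_rfl hF

variable [FiniteDimensional K V]

lemma eq_zero_of_f_pow_apply_eq_zero (hs : IsSl2Action E F H) {k : ℕ} {v : V}
    (hv : v ∈ H.eigenspace (k : K)) (hF : (F ^ k) v = 0) : v = 0 :=
  let ⟨_, hE⟩ := exists_pow_apply_eq_zero_of_mapsTo_eigenspace two_ne_zero hs.mapsTo_e hv
  hs.eq_zero_of_f_pow_apply_eq_zero_of_e_pow_apply_eq_zero hv hF hE

lemma injective_restrict_f_pow (hs : IsSl2Action E F H) {k : ℕ}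
    (hmap : ∀ v ∈ H.eigenspace (k : K), (F ^ k) v ∈ H.eigenspace (-(k : K))) :
    Function.Injective ((F ^ k).restrict hmap) :=
  (injective_iff_map_eq_zero _).mpr fun v hv =>
    Subtype.ext (hs.eq_zero_of_f_pow_apply_eq_zero v.2 (congrArg Subtype.val hv))

lemma finrank_eigenspace_le (hs : IsSl2Action E F H) (k : ℕ) :
    finrank K (H.eigenspace (k : K)) ≤ finrank K (H.eigenspace (-(k : K))) :=
  LinearMap.finrank_le_finrank_of_injective
    (hs.injective_restrict_f_pow fun _ hv => hs.mapsTo_f_pow_eigenspace_neg k hv)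

lemma finrank_eigenspace_neg (hs : IsSl2Action E F H) (k : ℕ) :
    finrank K (H.eigenspace (-(k : K))) = finrank K (H.eigenspace (k : K)) := by
  refine le_antisymm ?_ (hs.finrank_eigenspace_le k)
  have := hs.symm.finrank_eigenspace_le k
  rwa [eigenspace_neg, eigenspace_neg, neg_neg] at this

end Field

end IsSl2Action

/-- In a finite-dimensional `𝔰𝔩₂(ℂ)`-representation, `f^k : V[k] → V[-k]` is a linear
isomorphism for every `k ≥ 0`. -/
theorem f_pow_k_bijective
    (V : Type*) [AddCommGroup V] [Module ℂ V] [FiniteDimensional ℂ V]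
    (E F H : Module.End ℂ V)
    (hEF : E * F - F * E = H)
    (hHE : H * E - E * H = (2 : ℂ) • E)
    (hHF : H * F - F * H = (-2 : ℂ) • F)
    (k : ℕ) :
    ∃ hmap : ∀ v ∈ Module.End.eigenspace H (k : ℂ),
        (F ^ k) v ∈ Module.End.eigenspace H (-(k : ℂ)),
      Function.Bijective ((F ^ k).restrict hmap) := by
  have hs : IsSl2Action E F H := ⟨hEF, hHE, hHF⟩
  have hmap : ∀ v ∈ H.eigenspace (k : ℂ), (F ^ k) v ∈ H.eigenspace (-(k : ℂ)) :=
    fun _ hv => hs.mapsTo_f_pow_eigenspace_neg k hv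
  have hinj := hs.injective_restrict_f_pow hmap
  exact ⟨hmap, hinj, (LinearMap.injective_iff_surjective_of_finrank_eq_finrank
    (hs.finrank_eigenspace_neg k).symm).mp hinj⟩
end

section
/- Let P = P_0 ⊔ P_1 ⊔ ... ⊔ P_r be a finite ranked poset, and suppose there exists a linear operator φ on the complex vector space with basis P sending each element x ∈ P_i (for i ≥ 1) to a linear combination of elements covered by x (which lie in P_{i-1}), such that φ^{r-2i} : ℂP_{r-i} → ℂP_i is an isomorphism for each i with 2i ≤ r. Then P is strongly Sperner: for every k, no union of k antichains of P has more elements than the union of the k largest rank levels P_i. -/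
/-!
Stanley's argument. Give each element of a union `U` of `k` antichains its height in `U`, which is
less than `k`; pairing `x` with the reversed height embeds `U` as an antichain into `Q = P × C_k`,
the product with a `k`-element chain. On `Q` the operator `φ ⊗ 1 - 1 ⊗ ψ` lowers the rank and,
checked slice by slice from the hypothesis on `φ`, is injective on `ℂQ_{m+1}` for `m ≥ c` and maps
`ℂQ_{m+1}` onto `ℂQ_m` for `m < c`, where `c = ⌊(r + k) / 2⌋`. By Hall's theorem (a linearly
independent family of vectors has distinct representatives among its nonzero coordinates) this
yields order-matchings between consecutive levels towards rank `c`. Following them moves every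
element of `Q` to rank `c` so that elements with the same image are comparable; hence an antichain
of `Q` is no larger than `Q_c`, which projects injectively into the `k` levels `P_{c-b}`, `b < k`.
-/

open Module

variable {P : Type*}

/-- The subspace of `ℂP` spanned by elements of rank `i` (functions supported on rank `i`). -/
noncomputable def rankLevel [Fintype P] (rk : P → ℕ) (i : ℕ) : Submodule ℂ (P → ℂ) where
  carrier := {f | ∀ x : P, rk x ≠ i → f x = 0}
  add_mem' := by
    intro a b ha hb x hx
    simp [ha x hx, hb x hx]
  zero_mem' := by
    intro x hx
    rfl
  smul_mem' := by
    intro c a ha x hx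
    simp [ha x hx]

open Finset in
theorem LinearIndependent.exists_injective_apply_ne_zero {ι Y K : Type*} [Field K] [Fintype Y]
    {v : ι → Y → K} (hv : LinearIndependent K v) :
    ∃ g : ι → Y, Function.Injective g ∧ ∀ i, v i (g i) ≠ 0 := by
  classical
  have hall : ∀ s : Finset ι, #s ≤ #(s.biUnion fun i => {y | v i y ≠ 0}) := by
    intro s
    set T := s.biUnion fun i => ({y | v i y ≠ 0} : Finset Y)
    have hspan : Set.range (fun i : s => v i) ≤
        (Submodule.span K (Set.range fun y : T => (Pi.single y.1 1 : Y → K)) : Set (Y → K)) := by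
      rintro _ ⟨i, rfl⟩
      show v i ∈ _
      rw [pi_eq_sum_univ' (v i)]
      refine Submodule.sum_mem _ fun y _ => ?_
      by_cases hy : y ∈ T
      · exact Submodule.smul_mem _ _ (Submodule.subset_span ⟨⟨y, hy⟩, rfl⟩)
      · have : v i y = 0 := by
          by_contra h
          exact hy (mem_biUnion.2 ⟨i, i.2, by simpa using h⟩)
        simp [this]
    have := linearIndependent_le_span_aux' _ (hv.comp _ Subtype.val_injective) _ hspan
    simpa using this.trans (Fintype.card_range_le _)
  obtain ⟨g, hg, hmem⟩ := (all_card_le_biUnion_card_iff_exists_injective _).1 hall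
  exact ⟨g, hg, fun i => by simpa using hmem i⟩

theorem LinearMap.apply_eq_sum_mul_apply_single {R X Y : Type*} [CommSemiring R] [Fintype X]
    [DecidableEq X] (L : (X → R) →ₗ[R] (Y → R)) (f : X → R) (y : Y) :
    L f y = ∑ x, f x * L (Pi.single x 1) y := by
  conv_lhs => rw [pi_eq_sum_univ' f, map_sum]
  simp [Finset.sum_apply]

theorem Set.exists_injOn_of_injective {α : Type*} {s : Set α} {p : α → α → Prop} {g : s → α}
    (hg : Function.Injective g) (hp : ∀ x : s, p x (g x)) :
    ∃ f : α → α, Set.InjOn f s ∧ ∀ x ∈ s, p x (f x) := by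
  classical
  refine ⟨fun x => if hx : x ∈ s then g ⟨x, hx⟩ else x, fun x hx y hy hxy => ?_, fun x hx => ?_⟩
  · simp only [dif_pos hx, dif_pos hy] at hxy
    exact congrArg Subtype.val (hg hxy)
  · simpa [dif_pos hx] using hp ⟨x, hx⟩

structure IsCentering {Q : Type*} [Preorder Q] (ρ : Q → ℕ) (c : ℕ) (t : Q → Q) : Prop where
  up : ∀ q, ρ q < c → q ≤ t q ∧ ρ (t q) = ρ q + 1
  down : ∀ q, c < ρ q → t q ≤ q ∧ ρ (t q) + 1 = ρ q
  fixed : ∀ q, ρ q = c → t q = q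
  injOn : ∀ m, Set.InjOn t {q | ρ q = m}

namespace IsCentering

variable {Q : Type*} [PartialOrder Q] {ρ : Q → ℕ} {c : ℕ} {t : Q → Q} (ht : IsCentering ρ c t)
include ht

theorem rank_apply_eq_of_rank_eq {q q' : Q} (h : ρ q = ρ q') : ρ (t q) = ρ (t q') := by
  rcases lt_trichotomy (ρ q) c with hlt | heq | hgt
  · rw [(ht.up q hlt).2, (ht.up q' (h ▸ hlt)).2, h]
  · rw [ht.fixed q heq, ht.fixed q' (h ▸ heq), h]
  · have := (ht.down q hgt).2
    have := (ht.down q' (h ▸ hgt)).2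
    omega

theorem injOn_iterate (n m : ℕ) : Set.InjOn t^[n] {q | ρ q = m} := by
  induction n generalizing m with
  | zero => exact Set.injOn_id _
  | succ n ih =>
    intro q hq q' hq' h
    simp only [Function.iterate_succ_apply] at h
    exact ht.injOn m hq hq' (ih _ rfl (ht.rank_apply_eq_of_rank_eq (hq.trans hq'.symm)).symm h)

theorem le_iterate {q : Q} (hq : ρ q ≤ c) (n : ℕ) : q ≤ t^[n] q := by
  induction n generalizing q with
  | zero => exact le_rfl
  | succ n ih =>
    rw [Function.iterate_succ_apply]
    rcases hq.lt_or_eq with hlt | heq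
    · exact (ht.up q hlt).1.trans (ih (by rw [(ht.up q hlt).2]; omega))
    · rw [ht.fixed q heq]
      exact ih hq

theorem iterate_le {q : Q} (hq : c ≤ ρ q) (n : ℕ) : t^[n] q ≤ q := by
  induction n generalizing q with
  | zero => exact le_rfl
  | succ n ih =>
    rw [Function.iterate_succ_apply]
    rcases hq.lt_or_eq with hlt | heq
    · exact (ih (by have := (ht.down q hlt).2; omega)).trans (ht.down q hlt).1
    · rw [ht.fixed q heq.symm]
      exact ih hq

theorem rank_iterate_of_add_le {q : Q} {n : ℕ} (h : ρ q + n ≤ c) : ρ (t^[n] q) = ρ q + n := by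
  induction n generalizing q with
  | zero => rfl
  | succ n ih =>
    have hup := (ht.up q (by omega)).2
    rw [Function.iterate_succ_apply, ih (by omega), hup]
    omega

theorem rank_iterate_add_of_le {q : Q} {n : ℕ} (h : c + n ≤ ρ q) : ρ (t^[n] q) + n = ρ q := by
  induction n generalizing q with
  | zero => rfl
  | succ n ih =>
    have hdown := (ht.down q (by omega)).2
    rw [Function.iterate_succ_apply]
    have := ih (q := t q) (by omega)
    omega

theorem rank_iterate_eq {q : Q} {n : ℕ} (h₁ : ρ q ≤ c + n) (h₂ : c ≤ ρ q + n) :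
    ρ (t^[n] q) = c := by
  induction n generalizing q with
  | zero => rw [Function.iterate_zero_apply]; omega
  | succ n ih =>
    rw [Function.iterate_succ_apply]
    rcases lt_trichotomy (ρ q) c with hlt | heq | hgt
    · exact ih (by have := (ht.up q hlt).2; omega) (by have := (ht.up q hlt).2; omega)
    · exact ih (by rw [ht.fixed q heq]; omega) (by rw [ht.fixed q heq]; omega)
    · exact ih (by have := (ht.down q hgt).2; omega) (by have := (ht.down q hgt).2; omega)

theorem iterate_iterate_eq {q : Q} {n : ℕ} (hc : ρ (t^[n] q) = c) (d : ℕ) :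
    t^[n] (t^[d] q) = t^[n] q := by
  rw [← Function.iterate_add_apply, add_comm, Function.iterate_add_apply,
    Function.iterate_fixed (ht.fixed _ hc)]

theorem le_of_iterate_eq {q q' : Q} {n : ℕ} (hle : ρ q ≤ ρ q') (hc : ρ (t^[n] q) = c)
    (h : t^[n] q = t^[n] q') : q ≤ q' := by
  rcases le_or_gt (ρ q') c with hq' | hq'
  · have hd : ρ (t^[ρ q' - ρ q] q) = ρ q' := by
      rw [ht.rank_iterate_of_add_le (by omega)]
      omega
    have := ht.injOn_iterate n _ hd rfl (by rw [ht.iterate_iterate_eq hc, h])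
    exact this ▸ ht.le_iterate (hle.trans hq') _
  rcases le_or_gt c (ρ q) with hq | hq
  · have hd : ρ (t^[ρ q' - ρ q] q') = ρ q := by
      have := ht.rank_iterate_add_of_le (q := q') (n := ρ q' - ρ q) (by omega)
      omega
    have := ht.injOn_iterate n _ hd rfl (by rw [ht.iterate_iterate_eq (h ▸ hc), h])
    exact this ▸ ht.iterate_le hq'.le _
  · exact (ht.le_iterate hq.le n).trans (h ▸ ht.iterate_le hq'.le n)

end IsCentering

theorem IsAntichain.ncard_le_of_isCentering {Q : Type*} [PartialOrder Q] [Finite Q] {ρ : Q → ℕ}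
    {c : ℕ} {t : Q → Q} {B : Set Q} (hB : IsAntichain (· ≤ ·) B) (ht : IsCentering ρ c t) :
    B.ncard ≤ {q | ρ q = c}.ncard := by
  obtain ⟨N, hN⟩ := (Set.finite_range ρ).bddAbove
  have hrank : ∀ q, ρ (t^[N + c] q) = c := fun q =>
    ht.rank_iterate_eq (by have := hN ⟨q, rfl⟩; omega) (by omega)
  refine Set.ncard_le_ncard_of_injOn t^[N + c] (fun q _ => hrank q) fun q hq q' hq' h => ?_
  rcases le_total (ρ q) (ρ q') with hle | hle
  · exact hB.eq hq hq' (ht.le_of_iterate_eq hle (hrank q) h)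
  · exact (hB.eq hq' hq (ht.le_of_iterate_eq hle (hrank q') h.symm)).symm

section Lowering

variable {Q : Type*} [Fintype Q] [DecidableEq Q] [PartialOrder Q] {ρ : Q → ℕ}
  {Φ : (Q → ℂ) →ₗ[ℂ] (Q → ℂ)}

def IsLowering (ρ : Q → ℕ) (Φ : (Q → ℂ) →ₗ[ℂ] (Q → ℂ)) : Prop :=
  ∀ x y, Φ (Pi.single x 1) y ≠ 0 → y < x ∧ ρ y + 1 = ρ x

theorem IsLowering.apply_mem_rankLevel (hΦ : IsLowering ρ Φ) {f : Q → ℂ} {n j : ℕ}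
    (hf : f ∈ rankLevel (ρ · + n) j) : Φ f ∈ rankLevel (ρ · + (n + 1)) j := by
  intro y (hy : ρ y + (n + 1) ≠ j)
  rw [Φ.apply_eq_sum_mul_apply_single]
  refine Finset.sum_eq_zero fun x _ => ?_
  by_cases hx : ρ x + n = j
  · by_cases hxy : Φ (Pi.single x 1) y = 0
    · rw [hxy, mul_zero]
    · have := (hΦ x y hxy).2
      omega
  · rw [hf x hx, zero_mul]

theorem IsLowering.exists_injOn_lt (hΦ : IsLowering ρ Φ) {m : ℕ}
    (hinj : ∀ F ∈ rankLevel ρ (m + 1), Φ F = 0 → F = 0) :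
    ∃ f : Q → Q, Set.InjOn f {q | ρ q = m + 1} ∧
      ∀ q ∈ {q | ρ q = m + 1}, f q < q ∧ ρ (f q) = m := by
  have hli : LinearIndependent ℂ fun x : {q | ρ q = m + 1} => Φ (Pi.single x.1 1) := by
    refine Fintype.linearIndependent_iff.2 fun a ha x => ?_
    set F : Q → ℂ := ∑ y : {q | ρ q = m + 1}, a y • Pi.single y.1 1
    have hF : F ∈ rankLevel ρ (m + 1) := by
      intro q hq
      simp only [F, Finset.sum_apply, Pi.smul_apply, Pi.single_apply]
      refine Finset.sum_eq_zero fun y _ => ?_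
      rw [if_neg (by rintro rfl; exact hq y.2), smul_zero]
    have hF0 := hinj F hF (by simpa [F, map_sum] using ha)
    simpa [F, Finset.sum_apply, Pi.single_apply, Subtype.val_inj] using congrFun hF0 x
  obtain ⟨g, hg, hne⟩ := hli.exists_injective_apply_ne_zero
  exact Set.exists_injOn_of_injective (p := fun q f => f < q ∧ ρ f = m) hg fun x => by
    have hx : ρ x = m + 1 := x.2
    exact ⟨(hΦ _ _ (hne x)).1, by have := (hΦ _ _ (hne x)).2; omega⟩

theorem IsLowering.exists_injOn_gt (hΦ : IsLowering ρ Φ) {m : ℕ}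
    (hsurj : ∀ G ∈ rankLevel ρ m, ∃ F, Φ F = G) :
    ∃ f : Q → Q, Set.InjOn f {q | ρ q = m} ∧
      ∀ q ∈ {q | ρ q = m}, q < f q ∧ ρ (f q) = m + 1 := by
  have hli : LinearIndependent ℂ fun (y : {q | ρ q = m}) x => Φ (Pi.single x 1) y.1 := by
    refine Fintype.linearIndependent_iff.2 fun a ha y => ?_
    obtain ⟨F, hF⟩ := hsurj (Pi.single y.1 1) fun q hq => by
      rw [Pi.single_apply, if_neg (by rintro rfl; exact hq y.2)]
    calc a y = ∑ z : {q | ρ q = m}, a z * Φ F z := by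
          simp [hF, Pi.single_apply, Subtype.val_inj]
      _ = ∑ x, F x * ∑ z : {q | ρ q = m}, a z * Φ (Pi.single x 1) z := by
          simp only [Φ.apply_eq_sum_mul_apply_single F, Finset.mul_sum]
          rw [Finset.sum_comm]
          simp only [mul_left_comm]
      _ = 0 := by
          refine Finset.sum_eq_zero fun x _ => ?_
          simpa [Finset.sum_apply] using Or.inr (congrFun ha x)
  obtain ⟨g, hg, hne⟩ := hli.exists_injective_apply_ne_zero
  exact Set.exists_injOn_of_injective (p := fun q f => q < f ∧ ρ f = m + 1) hg fun y => by
    have hy : ρ y = m := y.2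
    exact ⟨(hΦ _ _ (hne y)).1, by have := (hΦ _ _ (hne y)).2; omega⟩

theorem IsLowering.ncard_le_of_isAntichain (hΦ : IsLowering ρ Φ) {c : ℕ}
    (hinj : ∀ m, c ≤ m → ∀ F ∈ rankLevel ρ (m + 1), Φ F = 0 → F = 0)
    (hsurj : ∀ m < c, ∀ G ∈ rankLevel ρ m, ∃ F, Φ F = G)
    {B : Set Q} (hB : IsAntichain (· ≤ ·) B) : B.ncard ≤ {q | ρ q = c}.ncard := by
  have hup (m : ℕ) : ∃ f : Q → Q, m < c → Set.InjOn f {q | ρ q = m} ∧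
      ∀ q ∈ {q | ρ q = m}, q < f q ∧ ρ (f q) = m + 1 := by
    by_cases hm : m < c
    · obtain ⟨f, hf⟩ := hΦ.exists_injOn_gt (hsurj m hm)
      exact ⟨f, fun _ => hf⟩
    · exact ⟨id, fun h => absurd h hm⟩
  have hdown (m : ℕ) : ∃ f : Q → Q, c ≤ m → Set.InjOn f {q | ρ q = m + 1} ∧
      ∀ q ∈ {q | ρ q = m + 1}, f q < q ∧ ρ (f q) = m := by
    by_cases hm : c ≤ m
    · obtain ⟨f, hf⟩ := hΦ.exists_injOn_lt (hinj m hm)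
      exact ⟨f, fun _ => hf⟩
    · exact ⟨id, fun h => absurd h hm⟩
  choose up hup using hup
  choose down hdown using hdown
  refine hB.ncard_le_of_isCentering (t := fun q =>
    if ρ q < c then up (ρ q) q else if c < ρ q then down (ρ q - 1) q else q) ⟨?_, ?_, ?_, ?_⟩
  · intro q hq
    have := (hup _ hq).2 q rfl
    simpa only [if_pos hq] using ⟨this.1.le, this.2⟩
  · intro q hq
    have := (hdown (ρ q - 1) (by omega)).2 q (by show ρ _ = _; omega)
    simpa only [if_neg (not_lt.2 hq.le), if_pos hq] using ⟨this.1.le, by omega⟩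
  · intro q hq
    simp [hq]
  · intro m q (hq : ρ q = m) q' (hq' : ρ q' = m) h
    simp only [hq, hq'] at h
    split_ifs at h with h₁ h₂
    · exact (hup m h₁).1 hq hq' h
    · have hmem : ∀ p, ρ p = m → p ∈ {q | ρ q = m - 1 + 1} := fun p hp => by
        show ρ _ = _; omega
      exact (hdown (m - 1) (by omega)).1 (hmem q hq) (hmem q' hq') h
    · exact h

end Lowering

def IsLefschetz [Fintype P] (rk : P → ℕ) (r : ℕ) (φ : (P → ℂ) →ₗ[ℂ] (P → ℂ)) : Prop :=
  ∀ i : ℕ, 2 * i ≤ r →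
    ∃ hmap : ∀ f ∈ rankLevel rk (r - i), (φ ^ (r - 2 * i)) f ∈ rankLevel rk i,
      Function.Bijective ((φ ^ (r - 2 * i)).restrict hmap)

section Lefschetz

variable [Fintype P] {rk : P → ℕ} {r : ℕ} {φ : (P → ℂ) →ₗ[ℂ] (P → ℂ)}

theorem IsLefschetz.eq_zero_of_pow_apply_eq_zero (hL : IsLefschetz rk r φ)
    (hbound : ∀ x, rk x ≤ r) {n j : ℕ} (hj : r + n ≤ 2 * j) {f : P → ℂ}
    (hf : f ∈ rankLevel rk j) (h : (φ ^ n) f = 0) : f = 0 := by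
  by_cases hjr : j ≤ r
  · obtain ⟨hmap, hbij⟩ := hL (r - j) (by omega)
    have hf' : f ∈ rankLevel rk (r - (r - j)) := by rwa [Nat.sub_sub_self hjr]
    have hzero : (φ ^ (r - 2 * (r - j))) f = 0 := by
      rw [show r - 2 * (r - j) = r - 2 * (r - j) - n + n by omega, pow_add,
        Module.End.mul_apply, h, map_zero]
    exact congrArg Subtype.val
      (hbij.1 (a₁ := ⟨f, hf'⟩) (a₂ := 0) (Subtype.ext (by simpa using hzero)))
  · funext x
    exact hf x (by have := hbound x; omega)

theorem IsLefschetz.exists_pow_apply_eq (hL : IsLefschetz rk r φ) {n j : ℕ} (hj : 2 * j ≤ r + n)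
    {g : P → ℂ} (hg : g ∈ rankLevel (rk · + n) j) : ∃ f, (φ ^ n) f = g := by
  by_cases hnj : n ≤ j
  · obtain ⟨hmap, hbij⟩ := hL (j - n) (by omega)
    obtain ⟨⟨f, _⟩, hf⟩ := hbij.2 ⟨g, fun x hx => hg x (by simp only; omega)⟩
    refine ⟨(φ ^ (r - 2 * (j - n) - n)) f, ?_⟩
    rw [← Module.End.mul_apply, ← pow_add,
      show n + (r - 2 * (j - n) - n) = r - 2 * (j - n) by omega]
    exact congrArg Subtype.val hf
  · refine ⟨0, ?_⟩
    funext x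
    rw [map_zero]
    exact (hg x (by simp only; omega)).symm

end Lefschetz

def chainProdRank (rk : P → ℕ) (k : ℕ) (q : P × Fin k) : ℕ := rk q.1 + q.2

noncomputable def chainSlice (k b : ℕ) : (P × Fin k → ℂ) →ₗ[ℂ] (P → ℂ) :=
  if h : b < k then LinearMap.funLeft ℂ ℂ fun x => (x, ⟨b, h⟩) else 0

theorem chainSlice_apply {k : ℕ} (b : ℕ) (F : P × Fin k → ℂ) (x : P) :
    chainSlice k b F x = if h : b < k then F (x, ⟨b, h⟩) else 0 := by
  unfold chainSlice
  split_ifs <;> rfl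

theorem chainSlice_single [DecidableEq P] {k : ℕ} (x : P) (b : Fin k) (b' : ℕ) :
    chainSlice k b' (Pi.single (x, b) 1) = if b' = b then Pi.single x 1 else 0 := by
  funext z
  rw [chainSlice_apply]
  split_ifs with h₁ h₂ h₂
  · simp [Pi.single_apply, Prod.ext_iff, h₂]
  · simp [Prod.ext_iff, Fin.ext_iff, h₂]
  · exact absurd (h₂ ▸ b.isLt) h₁
  · rfl

theorem chainSlice_mem_rankLevel [Fintype P] {rk : P → ℕ} {k m : ℕ} {F : P × Fin k → ℂ}
    (hF : F ∈ rankLevel (chainProdRank rk k) m) (b : ℕ) :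
    chainSlice k b F ∈ rankLevel (rk · + b) m := by
  intro x hx
  rw [chainSlice_apply]
  split_ifs with hb
  · exact hF _ hx
  · rfl

/-- The operator `φ ⊗ 1 - 1 ⊗ ψ` on `ℂP ⊗ ℂ[Fin k]`, where `ψ` lowers the chain `Fin k` by one;
the sign spares the `(-1) ^ b` factors in its kernel and preimages. -/
noncomputable def chainProdLowering (φ : (P → ℂ) →ₗ[ℂ] (P → ℂ)) (k : ℕ) :
    (P × Fin k → ℂ) →ₗ[ℂ] (P × Fin k → ℂ) :=
  LinearMap.pi fun q => LinearMap.proj q.1 ∘ₗ (φ ∘ₗ chainSlice k q.2 - chainSlice k (q.2 + 1))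

section ChainProdLowering

variable {φ : (P → ℂ) →ₗ[ℂ] (P → ℂ)} {k : ℕ}

theorem chainProdLowering_apply (F : P × Fin k → ℂ) (x : P) (b : Fin k) :
    chainProdLowering φ k F (x, b) = φ (chainSlice k b F) x - chainSlice k (b + 1) F x :=
  rfl

theorem chainSlice_chainProdLowering {b : ℕ} (hb : b < k) (F : P × Fin k → ℂ) :
    chainSlice k b (chainProdLowering φ k F) = φ (chainSlice k b F) - chainSlice k (b + 1) F := by
  funext x
  rw [chainSlice_apply, dif_pos hb, chainProdLowering_apply]
  rfl

theorem IsLowering.chainProdLowering [DecidableEq P] [PartialOrder P] {rk : P → ℕ}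
    (hφ : IsLowering rk φ) : IsLowering (chainProdRank rk k) (chainProdLowering φ k) := by
  rintro ⟨x, b⟩ ⟨y, b'⟩ h
  rw [chainProdLowering_apply, chainSlice_single, chainSlice_single] at h
  simp only [chainProdRank]
  split_ifs at h with h₁ h₂ h₂
  · omega
  · obtain ⟨hyx, hrk⟩ := hφ x y (by simpa using h)
    exact ⟨Prod.mk_lt_mk.2 (Or.inl ⟨hyx, (Fin.ext h₁).le⟩), by omega⟩
  · have hyx : y = x := by
      by_contra hne
      simp [hne] at h
    subst hyx
    exact ⟨Prod.mk_lt_mk.2 (Or.inr ⟨le_rfl, Fin.lt_def.2 (by omega)⟩), by omega⟩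
  · simp at h

end ChainProdLowering

theorem IsLefschetz.eq_zero_of_chainProdLowering_eq_zero [Fintype P] {rk : P → ℕ} {r : ℕ}
    {φ : (P → ℂ) →ₗ[ℂ] (P → ℂ)} (hL : IsLefschetz rk r φ) (hbound : ∀ x, rk x ≤ r) {k m : ℕ}
    (hm : r + k ≤ 2 * m) {F : P × Fin k → ℂ} (hF : F ∈ rankLevel (chainProdRank rk k) m)
    (h : chainProdLowering φ k F = 0) : F = 0 := by
  have hpow : ∀ b ≤ k, chainSlice k b F = (φ ^ b) (chainSlice k 0 F) := by
    intro b hb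
    induction b with
    | zero => rfl
    | succ b ih =>
      have hstep := chainSlice_chainProdLowering (φ := φ) (b := b) (by omega) F
      rw [h, map_zero, eq_comm, sub_eq_zero] at hstep
      rw [← hstep, ih (by omega), pow_succ', Module.End.mul_apply]
  have h0 : chainSlice k 0 F = 0 := by
    refine hL.eq_zero_of_pow_apply_eq_zero hbound hm
      (by simpa using chainSlice_mem_rankLevel hF 0) ?_
    rw [← hpow k le_rfl]
    funext x
    simp [chainSlice_apply]
  funext ⟨x, b⟩
  simpa [h0, chainSlice_apply] using congrFun (hpow b b.2.le) x

def sliceRec (φ : (P → ℂ) →ₗ[ℂ] (P → ℂ)) (g : ℕ → P → ℂ) (u : P → ℂ) : ℕ → P → ℂ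
  | 0 => u
  | b + 1 => φ (sliceRec φ g u b) - g b

theorem sliceRec_eq_add (φ : (P → ℂ) →ₗ[ℂ] (P → ℂ)) (g : ℕ → P → ℂ) (u : P → ℂ) (b : ℕ) :
    sliceRec φ g u b = sliceRec φ g 0 b + (φ ^ b) u := by
  induction b with
  | zero => simp [sliceRec]
  | succ b ih =>
    rw [sliceRec, sliceRec, ih, map_add, pow_succ', Module.End.mul_apply]
    abel

theorem IsLowering.sliceRec_mem_rankLevel [Fintype P] [DecidableEq P] [PartialOrder P]
    {rk : P → ℕ} {φ : (P → ℂ) →ₗ[ℂ] (P → ℂ)} (hφ : IsLowering rk φ) {g : ℕ → P → ℂ} {m : ℕ}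
    (hg : ∀ b, g b ∈ rankLevel (rk · + b) m) (b : ℕ) :
    sliceRec φ g 0 b ∈ rankLevel (rk · + b) (m + 1) := by
  induction b with
  | zero => exact zero_mem _
  | succ b ih =>
    refine sub_mem (hφ.apply_mem_rankLevel ih) fun x hx => hg b x ?_
    simp only at hx ⊢
    omega

theorem IsLefschetz.exists_chainProdLowering_eq [Fintype P] [DecidableEq P] [PartialOrder P]
    {rk : P → ℕ} {r : ℕ} {φ : (P → ℂ) →ₗ[ℂ] (P → ℂ)} (hL : IsLefschetz rk r φ)
    (hφ : IsLowering rk φ) {k m : ℕ} (hm : 2 * m + 2 ≤ r + k) {G : P × Fin k → ℂ}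
    (hG : G ∈ rankLevel (chainProdRank rk k) m) : ∃ F, chainProdLowering φ k F = G := by
  set g : ℕ → P → ℂ := fun b => chainSlice k b G
  -- the initial slice `u` is chosen so that the recursion ends in the absent slice `k` being zero
  obtain ⟨u, hu⟩ := hL.exists_pow_apply_eq (n := k) (j := m + 1) (by omega)
    (neg_mem (hφ.sliceRec_mem_rankLevel (fun b => chainSlice_mem_rankLevel hG b) k))
  have hk : sliceRec φ g u k = 0 := by rw [sliceRec_eq_add, hu, add_neg_cancel]
  set F : P × Fin k → ℂ := fun q => sliceRec φ g u q.2 q.1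
  have hslice : ∀ b ≤ k, chainSlice k b F = sliceRec φ g u b := by
    intro b hb
    funext x
    rw [chainSlice_apply]
    split_ifs with hbk
    · rfl
    · rw [show b = k by omega, hk]
      rfl
  refine ⟨F, funext fun ⟨x, b⟩ => ?_⟩
  rw [chainProdLowering_apply, hslice b b.2.le, hslice (b + 1) b.2, sliceRec]
  simp [g, chainSlice_apply]

theorem ncard_chainProdRank_eq_le [Fintype P] (rk : P → ℕ) (k c : ℕ) :
    {q : P × Fin k | chainProdRank rk k q = c}.ncard ≤
      ∑ i ∈ Finset.univ.image (fun b : Fin k => c - b), {x : P | rk x = i}.ncard := by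
  classical
  set S := Finset.univ.image fun b : Fin k => c - b
  calc _ ≤ {x : P | rk x ∈ S}.ncard := by
        refine Set.ncard_le_ncard_of_injOn Prod.fst (fun q (hq : rk q.1 + q.2 = c) => ?_)
          fun q (hq : rk q.1 + q.2 = c) q' (hq' : rk q'.1 + q'.2 = c) h => ?_
        · exact Finset.mem_image.2 ⟨q.2, Finset.mem_univ _, by omega⟩
        · exact Prod.ext h (Fin.ext (by rw [h] at hq; omega))
    _ = ∑ i ∈ S, {x : P | rk x = i}.ncard := by
        simp only [Set.ncard_eq_toFinset_card', Set.toFinset_ofPred]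
        exact (Finset.sum_card_fiberwise_eq_card_filter _ _ _).symm

theorem exists_strictMono_fin_of_isAntichain {α : Type*} [PartialOrder α] {k : ℕ}
    (A : Fin k → Set α) (hA : ∀ m, IsAntichain (· ≤ ·) (A m)) :
    ∃ h : (⋃ m, A m) → Fin k, StrictMono h := by
  have hheight : ∀ x : ⋃ m, A m, Order.height x < k := by
    intro x
    by_contra! hle
    obtain ⟨p, -, hp⟩ := Order.exists_series_of_le_height x hle
    have hmem : ∀ i, ∃ m, (p i : α) ∈ A m := fun i => Set.mem_iUnion.1 (p i).2
    choose idx hidx using hmem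
    obtain ⟨i, j, hij, heq⟩ := Fintype.exists_ne_map_eq_of_card_lt idx (by simp [hp])
    wlog hlt : i < j generalizing i j
    · exact this j i hij.symm heq.symm (hij.lt_or_gt.resolve_left hlt)
    exact hA (idx j) (heq ▸ hidx i) (hidx j) (Subtype.coe_ne_coe.2 (p.strictMono hlt).ne)
      (p.strictMono hlt).le
  have hfin : ∀ x : ⋃ m, A m, ∃ n : Fin k, Order.height x = (n : ℕ) := fun x => by
    obtain ⟨n, hn⟩ := ENat.ne_top_iff_exists.1 ((hheight x).trans (ENat.natCast_lt_top k)).ne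
    exact ⟨⟨n, by exact_mod_cast hn ▸ hheight x⟩, hn.symm⟩
  choose h hh using hfin
  refine ⟨h, fun x y hxy => ?_⟩
  have := Order.height_strictMono hxy ((hheight x).trans (ENat.natCast_lt_top k))
  rw [hh, hh] at this
  exact_mod_cast this

/-- Stanley's criterion: a finite ranked poset carrying a lowering operator `φ` whose
powers `φ^(r-2i) : ℂP_{r-i} → ℂP_i` are isomorphisms is strongly Sperner: the union of
any `k` antichains is no larger than the union of some `k` rank levels. -/
theorem lowering_operator_implies_strongly_sperner
    [Fintype P] [DecidableEq P] [PartialOrder P] (rk : P → ℕ) (r : ℕ)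
    (hrk : ∀ x y : P, x ⋖ y → rk y = rk x + 1)
    (hbound : ∀ x : P, rk x ≤ r)
    (φ : (P → ℂ) →ₗ[ℂ] (P → ℂ))
    (hφ : ∀ x y : P, φ (Pi.single x 1) y ≠ 0 → y ⋖ x)
    (hiso : ∀ i : ℕ, 2 * i ≤ r →
      ∃ hmap : ∀ f ∈ rankLevel rk (r - i), (φ ^ (r - 2 * i)) f ∈ rankLevel rk i,
        Function.Bijective ((φ ^ (r - 2 * i)).restrict hmap)) :
    ∀ (k : ℕ) (A : Fin k → Set P), (∀ m, IsAntichain (· ≤ ·) (A m)) →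
      ∃ S : Finset ℕ, S.card ≤ k ∧
        (⋃ m, A m).ncard ≤ ∑ i ∈ S, {x : P | rk x = i}.ncard := by
  intro k A hA
  have hL : IsLefschetz rk r φ := hiso
  have hlow : IsLowering rk φ := fun x y h => ⟨(hφ x y h).lt, (hrk y x (hφ x y h)).symm⟩
  obtain ⟨h, hh⟩ := exists_strictMono_fin_of_isAntichain A hA
  set e : (⋃ m, A m) → P × Fin k := fun x => (x, (h x).rev)
  have he : Function.Injective e := fun x y hxy => Subtype.ext (congrArg Prod.fst hxy)
  have hanti : IsAntichain (· ≤ ·) (Set.range e) := by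
    rintro _ ⟨x, rfl⟩ _ ⟨y, rfl⟩ hne hle
    have hxy : x < y := lt_of_le_of_ne hle.1 (by rintro rfl; exact hne rfl)
    exact (Fin.rev_lt_rev.2 (hh hxy)).not_ge hle.2
  refine ⟨Finset.univ.image fun b : Fin k => (r + k) / 2 - b,
    Finset.card_image_le.trans (by simp), ?_⟩
  calc (⋃ m, A m).ncard = (Set.range e).ncard := by
        rw [Set.ncard_range_of_injective he, Nat.card_coe_set_eq]
    _ ≤ {q | chainProdRank rk k q = (r + k) / 2}.ncard :=
        hlow.chainProdLowering.ncard_le_of_isAntichain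
          (fun m hm F hF => hL.eq_zero_of_chainProdLowering_eq_zero hbound (by omega) hF)
          (fun m hm G hG => hL.exists_chainProdLowering_eq hlow (by omega) hG) hanti
    _ ≤ _ := ncard_chainProdRank_eq_le rk k _
end
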